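/- Consider T rounds with values v_t ∈ [0,1] and competing bids d_t, budget 0 < B ≤ T, and Û(λ) the greedy budget-constrained utility of shading multiplier λ. Fix K = T² and grid points λ_k = k/K for k = 0,…,K. Then max_{k} Û(λ_k) ≥ sup_{λ∈[0,1]} Û(λ) − (1/B + 2) ≥ sup_{λ∈[0,1]} Û(λ) − 3. -/

import Mathlib

open scoped Classical

/-- One round of the greedy budget-constrained bidder with shading multiplier `lam`:
state is (remaining budget, accumulated utility); the bid is `min (lam * v t)`
(remaining budget); the player wins iff her bid strictly exceeds `d t`, paying her
bid and gaining value `v t`. -/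
noncomputable def auctionStep (v d : ℕ → ℝ) (lam : ℝ) (s : ℝ × ℝ) (t : ℕ) : ℝ × ℝ :=
  if d t < min (lam * v t) s.1 then
    (s.1 - min (lam * v t) s.1, s.2 + (v t - min (lam * v t) s.1))
  else s

/-- State (remaining budget, utility) after the first `t` rounds, starting with budget `B`. -/
noncomputable def auctionState (v d : ℕ → ℝ) (B lam : ℝ) (t : ℕ) : ℝ × ℝ :=
  (List.range t).foldl (auctionStep v d lam) (B, 0)

/-- `Û(lam)`: total utility of the greedy budget-constrained bidder over `T` rounds. -/
noncomputable def Uhat (T : ℕ) (v d : ℕ → ℝ) (B lam : ℝ) : ℝ :=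
  (auctionState v d B lam T).2

/-!
Round the multiplier up to the grid, `mu = ⌈lam T²⌉ / T²`. If every round won with `lam` is also
won with `mu`, the `mu`-run pays at most `(mu - lam) v` more per round, except for the single round
in which the `lam`-run exhausts its budget. Otherwise some round is won by `lam` but lost by `mu`,
so the `mu`-run has by then spent all but `mu` of its budget, at a rate of at most `mu` per round:
`B ≤ mu T`. Utility per unit spent is at least `1 / mu - 1` for the `mu`-run and at most
`1 / lam - 1` for the `lam`-run (up to the exhausting round), and these ratios differ by
`(mu - lam) / (lam mu)`, which costs at most `T² (mu - lam) / B`.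
-/

section Run

variable {v d : ℕ → ℝ} {B lam mu : ℝ}

@[simp]
lemma auctionState_zero : auctionState v d B lam 0 = (B, 0) := rfl

lemma auctionState_succ (t : ℕ) :
    auctionState v d B lam (t + 1) = auctionStep v d lam (auctionState v d B lam t) t := by
  simp [auctionState, List.range_succ]

lemma auctionState_fst_nonneg (hB : 0 ≤ B) (t : ℕ) : 0 ≤ (auctionState v d B lam t).1 := by
  induction t with
  | zero => exact hB
  | succ t ih =>
    rw [auctionState_succ, auctionStep]
    split_ifs
    · exact sub_nonneg.mpr (min_le_right _ _)
    · exact ih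

lemma antitone_auctionState_fst (hv : ∀ t, 0 ≤ v t) (hlam : 0 ≤ lam) (hB : 0 ≤ B) :
    Antitone fun t => (auctionState v d B lam t).1 := by
  refine antitone_nat_of_succ_le fun t => ?_
  rw [auctionState_succ, auctionStep]
  split_ifs
  · exact sub_le_self _ (le_min (mul_nonneg hlam (hv t)) (auctionState_fst_nonneg hB t))
  · exact le_rfl

lemma sub_mul_le_auctionState_fst (hv : ∀ t, v t ≤ 1) (hlam : 0 ≤ lam) (t : ℕ) :
    B - lam * t ≤ (auctionState v d B lam t).1 := by
  induction t with
  | zero => simp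
  | succ t ih =>
    have hpay : min (lam * v t) (auctionState v d B lam t).1 ≤ lam :=
      (min_le_left _ _).trans (mul_le_of_le_one_right hlam (hv t))
    rw [auctionState_succ, auctionStep]
    push_cast
    split_ifs <;> linarith

lemma monotone_auctionState_snd (hv : ∀ t, 0 ≤ v t) (hlam : lam ≤ 1) :
    Monotone fun t => (auctionState v d B lam t).2 := by
  refine monotone_nat_of_le_succ fun t => ?_
  have hpay : min (lam * v t) (auctionState v d B lam t).1 ≤ v t :=
    (min_le_left _ _).trans (mul_le_of_le_one_left (hv t) hlam)
  rw [auctionState_succ, auctionStep]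
  split_ifs
  · dsimp only; linarith
  · exact le_rfl

lemma auctionState_succ_of_fst_eq_zero (hd : ∀ t, 0 ≤ d t) {t : ℕ}
    (hb : (auctionState v d B lam t).1 = 0) :
    auctionState v d B lam (t + 1) = auctionState v d B lam t := by
  rw [auctionState_succ, auctionStep, if_neg]
  rw [hb, not_lt]
  exact (min_le_right _ _).trans (hd t)

lemma auctionState_fst_succ_eq_zero {t : ℕ} (hdb : d t < (auctionState v d B lam t).1)
    (hbv : (auctionState v d B lam t).1 < lam * v t) :
    (auctionState v d B lam (t + 1)).1 = 0 := by
  rw [auctionState_succ, auctionStep, min_eq_right hbv.le, if_pos hdb, sub_self]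

/- Once the budget is exhausted the bidder never wins again, so a quantity that can jump
only in the round exhausting the budget jumps at most once. -/
lemma le_of_increase_only_on_exhaustion (hd : ∀ t, 0 ≤ d t) {E : ℕ → ℝ} {c : ℝ} {n : ℕ}
    (hc : 0 ≤ c) (h0 : E 0 ≤ 0)
    (hstep : ∀ t < n, E (t + 1) ≤ E t ∨ d t < (auctionState v d B lam t).1 ∧
      (auctionState v d B lam t).1 < lam * v t ∧ E (t + 1) ≤ E t + c) :
    E n ≤ c := by
  suffices ∀ m ≤ n, E m ≤ 0 ∨ (auctionState v d B lam m).1 = 0 ∧ E m ≤ c by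
    rcases this n le_rfl with h | h
    exacts [h.trans hc, h.2]
  intro m hm
  induction m with
  | zero => exact Or.inl h0
  | succ m ih =>
    rcases ih (by omega) with ih | ⟨hb, ih⟩ <;> rcases hstep m (by omega) with h | ⟨hdb, hbv, h⟩
    · exact Or.inl (h.trans ih)
    · exact Or.inr ⟨auctionState_fst_succ_eq_zero hdb hbv, by linarith⟩
    · exact Or.inr ⟨by rw [auctionState_succ_of_fst_eq_zero hd hb, hb], h.trans ih⟩
    · linarith [hd m]

/- Each payment `p` is at most `mu * v`, so the gain `v - p` is at least `(1 / mu - 1) * p`. -/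
lemma one_sub_mul_spent_le_mul_auctionState_snd (t : ℕ) :
    (1 - mu) * (B - (auctionState v d B mu t).1) ≤ mu * (auctionState v d B mu t).2 := by
  induction t with
  | zero => simp
  | succ t ih =>
    have hpay : min (mu * v t) (auctionState v d B mu t).1 ≤ mu * v t := min_le_left _ _
    rw [auctionState_succ, auctionStep]
    split_ifs
    · dsimp only; linarith
    · exact ih

/- Conversely a full payment `lam * v` gains exactly `(1 / lam - 1)` times it; only the round
exhausting the budget pays less. -/
lemma mul_auctionState_snd_le_one_sub_mul_spent_add (hd : ∀ t, 0 ≤ d t) (hv : ∀ t, v t ≤ 1)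
    (hlam : 0 ≤ lam) (n : ℕ) :
    lam * (auctionState v d B lam n).2 ≤ (1 - lam) * (B - (auctionState v d B lam n).1) + lam := by
  have := le_of_increase_only_on_exhaustion (n := n) (c := lam) hd hlam
    (E := fun t => lam * (auctionState v d B lam t).2 -
      (1 - lam) * (B - (auctionState v d B lam t).1))
    (by simp) fun t _ => by
      rw [auctionState_succ, auctionStep]
      split_ifs with hw
      · rcases le_or_gt (lam * v t) (auctionState v d B lam t).1 with hfull | htrunc
        · left
          rw [min_eq_left hfull]
          linarith
        · right
          rw [min_eq_right htrunc.le] at hw ⊢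
          refine ⟨hw, htrunc, ?_⟩
          dsimp only
          nlinarith [hv t, hd t]
      · exact Or.inl le_rfl
  linarith

lemma auctionState_snd_le_add_of_wins_imp (hd : ∀ t, 0 ≤ d t) (hv : ∀ t, v t ∈ Set.Icc 0 1)
    (hlm : lam ≤ mu) (hmu : mu ≤ 1) (n : ℕ)
    (H : ∀ t < n, d t < min (lam * v t) (auctionState v d B lam t).1 →
      d t < min (mu * v t) (auctionState v d B mu t).1) :
    (auctionState v d B lam n).2 ≤ (auctionState v d B mu n).2 + (mu - lam) * n + 1 := by
  have := le_of_increase_only_on_exhaustion (n := n) (c := 1) hd zero_le_one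
    (E := fun t => (auctionState v d B lam t).2 - (auctionState v d B mu t).2 - (mu - lam) * t)
    (by simp) fun t ht => by
      have hmono := monotone_auctionState_snd (d := d) (B := B) (fun t => (hv t).1) hmu
        (Nat.le_succ t)
      have hμ := H t ht
      dsimp only at hmono ⊢
      push_cast
      rw [auctionState_succ (lam := lam), auctionStep]
      split_ifs with hw
      · have hpay : min (mu * v t) (auctionState v d B mu t).1 ≤ mu * v t := min_le_left _ _
        rw [auctionState_succ (lam := mu), auctionStep, if_pos (hμ hw)]
        rcases le_or_gt (lam * v t) (auctionState v d B lam t).1 with hfull | htrunc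
        · left
          rw [min_eq_left hfull]
          dsimp only
          nlinarith [mul_nonneg (sub_nonneg.2 hlm) (sub_nonneg.2 (hv t).2)]
        · right
          rw [min_eq_right htrunc.le] at hw ⊢
          refine ⟨hw, htrunc, ?_⟩
          dsimp only
          nlinarith [mul_le_of_le_one_left (hv t).1 hmu, (hv t).2, hd t]
      · left
        linarith
  linarith

lemma auctionState_fst_lt_of_wins_of_not_wins (hv : ∀ t, v t ∈ Set.Icc 0 1) (hlam : 0 ≤ lam)
    (hlm : lam ≤ mu) {t : ℕ} (hw : d t < min (lam * v t) (auctionState v d B lam t).1)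
    (hnw : min (mu * v t) (auctionState v d B mu t).1 ≤ d t) :
    (auctionState v d B mu t).1 < lam := by
  have hbid : d t < lam * v t := hw.trans_le (min_le_left _ _)
  have hbid_mu : lam * v t ≤ mu * v t := mul_le_mul_of_nonneg_right hlm (hv t).1
  have hb : (auctionState v d B mu t).1 ≤ d t := by
    rcases min_le_iff.mp hnw with h | h
    · linarith
    · exact h
  linarith [mul_le_of_le_one_right hlam (hv t).2]

/- `s` is the spending of the `lam`-run, `Ul` and `Um` are the utilities of the two runs, and the
`mu`-run has spent all but `mu` of its budget. -/
lemma le_add_of_spending_bounds {t B lam mu s Ul Um : ℝ} (hB : 0 < B) (hlam : 0 < lam)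
    (hlm : lam ≤ mu) (hmu : mu ≤ 1) (hsB : s ≤ B) (hst : s ≤ lam * t) (hBt : B ≤ mu * t)
    (hUl : lam * Ul ≤ (1 - lam) * s + lam) (hUm : (1 - mu) * (B - mu) ≤ mu * Um) :
    Ul ≤ Um + t ^ 2 * (mu - lam) / B + 2 := by
  have hmu0 : 0 < mu := hlam.trans_le hlm
  have hUl' : Ul ≤ s / lam - s + 1 := by
    rw [div_sub' hlam.ne', div_add_one hlam.ne', le_div_iff₀ hlam]
    linarith
  have hUm' : B / mu - B ≤ Um + 1 := by
    rw [div_sub' hmu0.ne', div_le_iff₀ hmu0]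
    nlinarith
  have ht : 0 < t := pos_of_mul_pos_right (hB.trans_le hBt) hmu0.le
  have hsl : s / lam ≤ t := (div_le_iff₀' hlam).mpr hst
  have hscale : (mu - lam) / mu ≤ t * (mu - lam) / B := by
    rw [div_le_div_iff₀ hmu0 hB]
    nlinarith [sub_nonneg.mpr hlm]
  calc Ul ≤ s / lam - s + 1 := hUl'
    _ = s * (1 / mu - 1) + s / lam * ((mu - lam) / mu) + 1 := by field_simp; ring
    _ ≤ B * (1 / mu - 1) + t * (t * (mu - lam) / B) + 1 := by
        gcongr
        exact sub_nonneg.mpr (one_le_one_div hmu0 hmu)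
    _ = B / mu - B + t ^ 2 * (mu - lam) / B + 1 := by ring
    _ ≤ Um + t ^ 2 * (mu - lam) / B + 2 := by linarith

lemma Uhat_le_Uhat_add_of_le {T : ℕ} (hd : ∀ t, 0 ≤ d t) (hv : ∀ t, v t ∈ Set.Icc 0 1)
    (hB : 0 < B) (hBT : B ≤ T) (hlam : 0 ≤ lam) (hlm : lam ≤ mu) (hmu : mu ≤ 1) :
    Uhat T v d B lam ≤ Uhat T v d B mu + T ^ 2 * (mu - lam) / B + 2 := by
  have hslack : (mu - lam) * T ≤ T ^ 2 * (mu - lam) / B := by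
    rw [le_div_iff₀ hB]
    nlinarith [mul_nonneg (sub_nonneg.mpr hlm) (Nat.cast_nonneg (α := ℝ) T)]
  by_cases H : ∀ t < T, d t < min (lam * v t) (auctionState v d B lam t).1 →
      d t < min (mu * v t) (auctionState v d B mu t).1
  · have := auctionState_snd_le_add_of_wins_imp hd hv hlm hmu T H
    unfold Uhat
    linarith
  push Not at H
  obtain ⟨τ, hτT, hw, hnw⟩ := H
  have hbτ := auctionState_fst_lt_of_wins_of_not_wins hv hlam hlm hw hnw
  have hlam_pos : 0 < lam := (auctionState_fst_nonneg hB.le τ).trans_lt hbτ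
  have hBmu : B ≤ mu * T := by
    have := sub_mul_le_auctionState_fst (d := d) (B := B) (fun t => (hv t).2) (hlam.trans hlm) τ
    have hτ : (τ : ℝ) + 1 ≤ T := by exact_mod_cast hτT
    nlinarith
  have hbT : (auctionState v d B mu T).1 ≤ mu :=
    (antitone_auctionState_fst (fun t => (hv t).1) (hlam.trans hlm) hB.le hτT.le).trans
      (hbτ.le.trans hlm)
  refine le_add_of_spending_bounds hB hlam_pos hlm hmu
    (s := B - (auctionState v d B lam T).1) ?_ ?_ hBmu ?_ ?_
  · linarith [auctionState_fst_nonneg (v := v) (d := d) (lam := lam) hB.le T]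
  · linarith [sub_mul_le_auctionState_fst (d := d) (B := B) (fun t => (hv t).2) hlam T]
  · exact mul_auctionState_snd_le_one_sub_mul_spent_add hd (fun t => (hv t).2) hlam T
  · calc (1 - mu) * (B - mu) ≤ (1 - mu) * (B - (auctionState v d B mu T).1) :=
          mul_le_mul_of_nonneg_left (by linarith) (sub_nonneg.mpr hmu)
      _ ≤ mu * Uhat T v d B mu := one_sub_mul_spent_le_mul_auctionState_snd T

lemma exists_grid_Uhat_le {T : ℕ} (hT : 0 < T) (hd : ∀ t, 0 ≤ d t) (hv : ∀ t, v t ∈ Set.Icc 0 1)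
    (hB : 0 < B) (hBT : B ≤ T) (hlam : lam ∈ Set.Icc (0 : ℝ) 1) :
    ∃ k ∈ Finset.range (T ^ 2 + 1),
      Uhat T v d B lam ≤ Uhat T v d B (k / (T ^ 2 : ℝ)) + (1 / B + 2) := by
  have hK : (0 : ℝ) < T ^ 2 := by positivity
  set k := ⌈lam * T ^ 2⌉₊
  have hkK : k ≤ T ^ 2 := Nat.ceil_le.mpr (by push_cast; nlinarith [hlam.2])
  refine ⟨k, Finset.mem_range_succ_iff.mpr hkK, ?_⟩
  have hlm : lam ≤ k / (T ^ 2 : ℝ) := (le_div_iff₀ hK).mpr (Nat.le_ceil _)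
  have hmu : k / (T ^ 2 : ℝ) ≤ 1 := (div_le_one hK).mpr (by exact_mod_cast hkK)
  have hgap : T ^ 2 * (k / (T ^ 2 : ℝ) - lam) ≤ 1 := by
    rw [mul_sub, mul_div_cancel₀ _ hK.ne']
    linarith [Nat.ceil_lt_add_one (mul_nonneg hlam.1 hK.le)]
  have := Uhat_le_Uhat_add_of_le hd hv hB hBT hlam.1 hlm hmu
  have : T ^ 2 * (k / (T ^ 2 : ℝ) - lam) / B ≤ 1 / B := div_le_div_of_nonneg_right hgap hB.le
  linarith

end Run

theorem stmt_6 (T : ℕ) (hT : 0 < T) (v d : ℕ → ℝ) (B : ℝ)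
    (hv : ∀ t, v t ∈ Set.Icc (0 : ℝ) 1) (hd : ∀ t, 0 ≤ d t)
    (hB : 1 ≤ B) (hBT : B ≤ T) :
    (Finset.range (T ^ 2 + 1)).sup' (by simp) (fun k => Uhat T v d B (k / (T ^ 2 : ℝ))) ≥
      (⨆ lam : Set.Icc (0 : ℝ) 1, Uhat T v d B lam) - (1 / B + 2) ∧
    (⨆ lam : Set.Icc (0 : ℝ) 1, Uhat T v d B lam) - (1 / B + 2) ≥
      (⨆ lam : Set.Icc (0 : ℝ) 1, Uhat T v d B lam) - 3 := by
  have hB0 : 0 < B := by linarith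
  have hsup : (⨆ lam : Set.Icc (0 : ℝ) 1, Uhat T v d B lam) ≤
      (Finset.range (T ^ 2 + 1)).sup' (by simp) (fun k => Uhat T v d B (k / (T ^ 2 : ℝ))) +
        (1 / B + 2) := by
    have : Nonempty (Set.Icc (0 : ℝ) 1) := ⟨⟨0, Set.left_mem_Icc.mpr zero_le_one⟩⟩
    refine ciSup_le fun lam => ?_
    obtain ⟨k, hk, hle⟩ := exists_grid_Uhat_le hT hd hv hB0 hBT lam.2
    have := Finset.le_sup' (fun k : ℕ => Uhat T v d B (k / (T ^ 2 : ℝ))) hk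
    linarith
  have h1B : 1 / B ≤ 1 := (div_le_one hB0).mpr hB
  constructor <;> linarith
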